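/- Let $a > 1$, $q \ge 2$, $0 < \lambda \le 1$, and let $u \in C_{c,\mathrm{rad}}^\infty(B_1^2)$ be a radial smooth function with compact support in the unit ball. Define $u_\lambda(x) = \lambda^{-1/2}\, u(y)$ where $y = (|x|/a)^{\lambda-1} x$. Then $u_\lambda$ is supported in the ball of radius $a^{1-1/\lambda} \le 1$, and $\int_{B_1^2} |\nabla u_\lambda(x)|^2\,dx = \int_{B_1^2} |\nabla u(y)|^2\,dy$ and $\int_{B_1^2} \frac{|u_\lambda(x)|^q}{|x|^2 (\log\frac{a}{|x|})^{1+q/2}}\,dx = \int_{B_1^2} \frac{|u(y)|^q}{|y|^2 (\log\frac{a}{|y|})^{1+q/2}}\,dy$. -/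

import Mathlib

open MeasureTheory Metric
open scoped ENNReal

noncomputable section

/-- The plane `ℝ²`. -/
abbrev E2 := EuclideanSpace ℝ (Fin 2)

/-- `u` is radially symmetric. -/
def IsRadial (u : E2 → ℝ) : Prop :=
  ∀ x y : E2, ‖x‖ = ‖y‖ → u x = u y

/-- The rescaled function `u_λ(x) = λ^{-1/2} u(y)`, `y = (|x|/a)^{λ-1} x`. -/
def scaledFun (a lam : ℝ) (u : E2 → ℝ) (x : E2) : ℝ :=
  lam ^ (-(1 : ℝ) / 2) * u (((‖x‖ / a) ^ (lam - 1)) • x)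

/-- The weight `|x|⁻² (log (a/|x|))^{-1-q/2}`. -/
def logWeight (a q : ℝ) (x : E2) : ℝ :=
  ‖x‖ ^ (-2 : ℝ) * Real.log (a / ‖x‖) ^ (-(1 + q / 2))

/-! ### Auxiliary lemmas -/

theorem hasFDerivAt_norm2 {x : E2} (hx : x ≠ 0) :
    HasFDerivAt (fun y : E2 => ‖y‖) (‖x‖⁻¹ • innerSL ℝ x) x := by
  have h1 : HasFDerivAt (fun y : E2 => ‖y‖ ^ 2) (2 • innerSL ℝ x) x :=
    (hasStrictFDerivAt_norm_sq x).hasFDerivAt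
  have hx2 : (0:ℝ) < ‖x‖ := norm_pos_iff.2 hx
  have h2 : HasDerivAt Real.sqrt (1 / (2 * Real.sqrt (‖x‖ ^ 2))) (‖x‖ ^ 2) :=
    Real.hasDerivAt_sqrt (by positivity)
  have h3 := h2.comp_hasFDerivAt x h1
  have heq : (Real.sqrt ∘ fun y : E2 => ‖y‖ ^ 2) = fun y : E2 => ‖y‖ := by
    funext y; simp [Function.comp, Real.sqrt_sq (norm_nonneg y)]
  rw [heq] at h3
  refine h3.congr_fderiv ?_
  rw [Real.sqrt_sq (norm_nonneg x)]
  ext h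
  simp [two_smul]
  field_simp
  ring

theorem radial_fderiv {g : ℝ → ℝ} {g' : ℝ} {x : E2} (hx : x ≠ 0)
    (hg : HasDerivAt g g' ‖x‖) :
    HasFDerivAt (fun y : E2 => g ‖y‖) (g' • (‖x‖⁻¹ • innerSL ℝ x)) x :=
  hg.comp_hasFDerivAt x (hasFDerivAt_norm2 hx)

theorem radial_fderiv_norm {g : ℝ → ℝ} {g' : ℝ} {x : E2} (hx : x ≠ 0)
    (hg : HasDerivAt g g' ‖x‖) :
    ‖fderiv ℝ (fun y : E2 => g ‖y‖) x‖ = |g'| := by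
  rw [(radial_fderiv hx hg).fderiv, norm_smul, norm_smul]
  have h : (0:ℝ) < ‖x‖ := norm_pos_iff.2 hx
  rw [innerSL_apply_norm]
  simp [abs_of_nonneg h.le, inv_mul_cancel₀ h.ne']

/-- The derivative of `φ(x) = (‖x‖/a)^{λ-1} • x`. -/
def Dphi (a lam : ℝ) (x : E2) : E2 →L[ℝ] E2 :=
  ((‖x‖ / a) ^ (lam - 1)) • ContinuousLinearMap.id ℝ E2
    + ((lam - 1) * (‖x‖ / a) ^ (lam - 2) / (a * ‖x‖)) • (innerSL ℝ x).smulRight x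

theorem normsq_E2 (x : E2) : x 0 * x 0 + x 1 * x 1 = ‖x‖ ^ 2 := by
  rw [EuclideanSpace.norm_sq_eq]
  simp [Fin.sum_univ_two, sq]

theorem det_Dphi (a lam : ℝ) (ha : 0 < a) {x : E2} (hx : x ≠ 0) :
    (Dphi a lam x).det = lam * ((‖x‖ / a) ^ (lam - 1)) ^ 2 := by
  set α := (‖x‖ / a) ^ (lam - 1) with hα
  set β := (lam - 1) * (‖x‖ / a) ^ (lam - 2) / (a * ‖x‖) with hβ
  have hb : (LinearMap.toMatrix (EuclideanSpace.basisFun (Fin 2) ℝ).toBasis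
      (EuclideanSpace.basisFun (Fin 2) ℝ).toBasis ((Dphi a lam x) : E2 →ₗ[ℝ] E2)) =
      !![α + β * (x 0 * x 0), β * (x 1 * x 0); β * (x 0 * x 1), α + β * (x 1 * x 1)] := by
    ext i j
    fin_cases i <;> fin_cases j <;>
      simp [LinearMap.toMatrix_apply, Dphi, α, β, EuclideanSpace.basisFun_apply,
        real_inner_comm, EuclideanSpace.inner_single_right, mul_comm]
  have hxpos : (0:ℝ) < ‖x‖ := norm_pos_iff.2 hx
  have hda : ‖x‖ / a ≠ 0 := by positivity
  have h1 : β * ‖x‖ ^ 2 = (lam - 1) * α := by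
    rw [hβ, hα]
    have : (‖x‖ / a) ^ (lam - 1) = (‖x‖ / a) ^ (lam - 2) * (‖x‖ / a) := by
      rw [← Real.rpow_add_one hda]; ring_nf
    rw [this]
    field_simp
  have hdet : (Dphi a lam x).det
      = Matrix.det !![α + β * (x 0 * x 0), β * (x 1 * x 0);
          β * (x 0 * x 1), α + β * (x 1 * x 1)] := by
    rw [ContinuousLinearMap.det, ← LinearMap.det_toMatrix
      (EuclideanSpace.basisFun (Fin 2) ℝ).toBasis, hb]
  rw [hdet, Matrix.det_fin_two_of]
  have expand : (α + β * (x 0 * x 0)) * (α + β * (x 1 * x 1))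
      - β * (x 1 * x 0) * (β * (x 0 * x 1))
      = α * α + α * (β * ‖x‖^2) := by rw [← normsq_E2 x]; ring
  rw [expand, h1]; ring

theorem hasFDerivAt_phi (a lam : ℝ) (ha : 0 < a) {x : E2} (hx : x ≠ 0) :
    HasFDerivAt (fun y : E2 => ((‖y‖ / a) ^ (lam - 1)) • y) (Dphi a lam x) x := by
  have hxpos : (0:ℝ) < ‖x‖ := norm_pos_iff.2 hx
  have hda : ‖x‖ / a ≠ 0 := by positivity
  have hdiv : HasDerivAt (fun t : ℝ => t / a) a⁻¹ ‖x‖ := by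
    simpa using (hasDerivAt_id ‖x‖).div_const a
  have hr : HasDerivAt (fun s : ℝ => s ^ (lam - 1))
      ((lam - 1) * (‖x‖ / a) ^ (lam - 1 - 1)) (‖x‖ / a) :=
    Real.hasDerivAt_rpow_const (Or.inl hda)
  have hg : HasDerivAt (fun t : ℝ => (t / a) ^ (lam - 1))
      ((lam - 1) * (‖x‖ / a) ^ (lam - 1 - 1) * a⁻¹) ‖x‖ := by have h := hr.comp ‖x‖ hdiv; exact h
  have hm : HasFDerivAt (fun y : E2 => (‖y‖ / a) ^ (lam - 1))
      (((lam - 1) * (‖x‖ / a) ^ (lam - 1 - 1) * a⁻¹) • (‖x‖⁻¹ • innerSL ℝ x)) x :=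
    hg.comp_hasFDerivAt x (hasFDerivAt_norm2 hx)
  have := hm.smul (hasFDerivAt_id x)
  refine this.congr_fderiv ?_
  ext h
  simp [Dphi, ContinuousLinearMap.smulRight_apply]
  have : lam - 1 - 1 = lam - 2 := by ring
  rw [this]
  field_simp

section ScalarLemmas
variable {a lam : ℝ} (ha : 1 < a) (hlam0 : 0 < lam)
include ha

theorem scalar_id {r : ℝ} (hr : 0 < r) :
    (r / a) ^ (lam - 1) * r = a ^ (1 - lam) * r ^ lam := by
  have ha0 : (0:ℝ) < a := lt_trans one_pos ha
  have h1 : r ^ (lam - 1) * r = r ^ lam := by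
    rw [← Real.rpow_add_one hr.ne']; ring_nf
  have h2 : (a ^ (lam - 1))⁻¹ = a ^ (1 - lam) := by
    rw [← Real.rpow_neg ha0.le]; ring_nf
  calc (r / a) ^ (lam - 1) * r = r ^ (lam-1) * r * (a ^ (lam-1))⁻¹ := by
        rw [Real.div_rpow hr.le ha0.le]; ring
    _ = a ^ (1 - lam) * r ^ lam := by rw [h1, h2]; ring

theorem scalar_id2 {r : ℝ} (hr : 0 < r) :
    (r / a) ^ (lam - 1) = a ^ (1 - lam) * r ^ (lam - 1) := by
  have ha0 : (0:ℝ) < a := lt_trans one_pos ha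
  have h2 : (a ^ (lam - 1))⁻¹ = a ^ (1 - lam) := by
    rw [← Real.rpow_neg ha0.le]; ring_nf
  rw [Real.div_rpow hr.le ha0.le, div_eq_mul_inv, h2, mul_comm]

theorem norm_phi {x : E2} (hx : x ≠ 0) :
    ‖((‖x‖ / a) ^ (lam - 1)) • x‖ = a ^ (1 - lam) * ‖x‖ ^ lam := by
  have hxpos : (0:ℝ) < ‖x‖ := norm_pos_iff.2 hx
  rw [norm_smul, Real.norm_eq_abs, abs_of_nonneg (Real.rpow_nonneg (by positivity) _)]
  exact scalar_id ha hxpos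

include hlam0

theorem rho_pow : a ^ (1-lam) * (a ^ (1 - 1/lam)) ^ lam = 1 := by
  have ha0 : (0:ℝ) < a := lt_trans one_pos ha
  rw [← Real.rpow_mul ha0.le, ← Real.rpow_add ha0]
  rw [show (1-lam) + (1-1/lam)*lam = 0 by field_simp; ring]
  exact Real.rpow_zero a

theorem phi_injOn :
    Set.InjOn (fun x : E2 => ((‖x‖ / a) ^ (lam - 1)) • x)
      (ball (0:E2) (a ^ (1 - 1/lam)) \ {0}) := by
  have ha0 : (0:ℝ) < a := lt_trans one_pos ha
  rintro x ⟨-, hx0⟩ y ⟨-, hy0⟩ hxy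
  have hx0' : x ≠ 0 := hx0
  have hy0' : y ≠ 0 := hy0
  have hxp : (0:ℝ) < ‖x‖ := norm_pos_iff.2 hx0'
  have hyp : (0:ℝ) < ‖y‖ := norm_pos_iff.2 hy0'
  have hxy' : ((‖x‖ / a) ^ (lam - 1)) • x = ((‖y‖ / a) ^ (lam - 1)) • y := hxy
  have hn : a ^ (1-lam) * ‖x‖ ^ lam = a ^ (1-lam) * ‖y‖ ^ lam := by
    rw [← norm_phi ha hx0', ← norm_phi ha hy0', hxy']
  have hc : (0:ℝ) < a ^ (1-lam) := Real.rpow_pos_of_pos ha0 _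
  have hnn : ‖x‖ ^ lam = ‖y‖ ^ lam := mul_left_cancel₀ hc.ne' hn
  have hnorm : ‖x‖ = ‖y‖ := le_antisymm
    (by by_contra h; push_neg at h
        exact absurd hnn (ne_of_gt (Real.rpow_lt_rpow hyp.le h hlam0)))
    (by by_contra h; push_neg at h
        exact absurd hnn (ne_of_lt (Real.rpow_lt_rpow hxp.le h hlam0)))
  have := hxy'
  simp only [hnorm] at this
  exact smul_right_injective E2 (by positivity : ((‖y‖ / a) ^ (lam - 1) : ℝ) ≠ 0) this

theorem phi_image :
    (fun x : E2 => ((‖x‖ / a) ^ (lam - 1)) • x) ''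
      (ball (0:E2) (a ^ (1 - 1/lam)) \ {0}) = ball (0:E2) 1 \ {0} := by
  have ha0 : (0:ℝ) < a := lt_trans one_pos ha
  have hc : (0:ℝ) < a ^ (1-lam) := Real.rpow_pos_of_pos ha0 _
  have hrho : (0:ℝ) < a ^ (1 - 1/lam) := Real.rpow_pos_of_pos ha0 _
  ext y
  constructor
  · rintro ⟨x, ⟨hxball, hx0⟩, rfl⟩
    have hx0' : (x:E2) ≠ 0 := hx0
    have hxp : (0:ℝ) < ‖x‖ := norm_pos_iff.2 hx0'
    have hxr : ‖x‖ < a ^ (1 - 1/lam) := by simpa using hxball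
    constructor
    · simp only [mem_ball, dist_zero_right]
      rw [norm_phi ha hx0']
      calc a ^ (1-lam) * ‖x‖ ^ lam
          < a ^ (1-lam) * (a ^ (1 - 1/lam)) ^ lam := by
            exact mul_lt_mul_of_pos_left (Real.rpow_lt_rpow hxp.le hxr hlam0) hc
        _ = 1 := rho_pow ha hlam0
    · simp only [Set.mem_singleton_iff]
      intro h
      have hnp : (0:ℝ) < ‖((‖x‖ / a) ^ (lam - 1)) • x‖ := by
        rw [norm_phi ha hx0']; positivity
      rw [h] at hnp; simp at hnp
  · rintro ⟨hyball, hy0⟩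
    have hy0' : (y:E2) ≠ 0 := hy0
    have hyp : (0:ℝ) < ‖y‖ := norm_pos_iff.2 hy0'
    have hyr : ‖y‖ < 1 := by simpa using hyball
    set t : ℝ := (‖y‖ / a ^ (1-lam)) ^ (1/lam) with ht
    have htp : 0 < t := Real.rpow_pos_of_pos (by positivity) _
    refine ⟨(t / ‖y‖) • y, ⟨?_, ?_⟩, ?_⟩
    · simp only [mem_ball, dist_zero_right, norm_smul, Real.norm_eq_abs,
        abs_of_pos (div_pos htp hyp)]
      rw [div_mul_cancel₀ _ hyp.ne']
      have h1 : t ^ lam = ‖y‖ / a ^ (1-lam) := by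
        rw [ht, ← Real.rpow_mul (by positivity), one_div, inv_mul_cancel₀ hlam0.ne',
          Real.rpow_one]
      have h2 : (a ^ (1 - 1/lam)) ^ lam = (a ^ (1-lam))⁻¹ :=
        eq_inv_of_mul_eq_one_right (rho_pow ha hlam0)
      have : t ^ lam < (a ^ (1 - 1/lam)) ^ lam := by
        rw [h1, h2, div_eq_mul_inv]
        calc ‖y‖ * (a ^ (1-lam))⁻¹ < 1 * (a ^ (1-lam))⁻¹ :=
              mul_lt_mul_of_pos_right hyr (inv_pos.2 hc)
          _ = (a ^ (1-lam))⁻¹ := one_mul _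
      by_contra hcon
      push_neg at hcon
      exact absurd this (not_lt.2 (Real.rpow_le_rpow hrho.le hcon hlam0.le))
    · intro h
      simp only [Set.mem_singleton_iff] at h
      apply hy0'
      rcases smul_eq_zero.1 h with h | h
      · exact absurd h (by positivity)
      · exact h
    · have hnx : ‖(t / ‖y‖) • y‖ = t := by
        rw [norm_smul, Real.norm_eq_abs, abs_of_pos (div_pos htp hyp),
          div_mul_cancel₀ _ hyp.ne']
      simp only [hnx, smul_smul]
      have h1 : t ^ lam = ‖y‖ / a ^ (1-lam) := by
        rw [ht, ← Real.rpow_mul (by positivity), one_div, inv_mul_cancel₀ hlam0.ne',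
          Real.rpow_one]
      have h3 : (t / a) ^ (lam - 1) * t = ‖y‖ := by
        rw [scalar_id ha htp, h1]; field_simp
      have key : (t / a) ^ (lam - 1) * (t / ‖y‖) = 1 := by
        rw [← mul_div_assoc, h3, div_self hyp.ne']
      rw [key, one_smul]

omit hlam0 in
include hlam0 in
theorem cov_ball (g : E2 → ℝ) :
    (∫ y in ball (0:E2) 1, g y) =
      ∫ x in ball (0:E2) (a ^ (1 - 1/lam)) \ {0},
        |(Dphi a lam x).det| * g (((‖x‖ / a) ^ (lam - 1)) • x) := by
  have hs : MeasurableSet (ball (0:E2) (a ^ (1 - 1/lam)) \ {0}) :=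
    measurableSet_ball.diff (measurableSet_singleton 0)
  have h0 : (∫ y in ball (0:E2) 1, g y) = ∫ y in ball (0:E2) 1 \ {0}, g y :=
    (setIntegral_congr_set ((diff_ae_eq_self).2
      (measure_mono_null Set.inter_subset_right (measure_singleton 0)))).symm
  rw [h0, ← phi_image ha hlam0,
    integral_image_eq_integral_abs_det_fderiv_smul volume hs
      (fun x hx => (hasFDerivAt_phi a lam (lt_trans one_pos ha)
        (fun h => hx.2 h)).hasFDerivWithinAt)
      (phi_injOn ha hlam0) g]
  simp only [smul_eq_mul]

end ScalarLemmas

theorem weight_alg {lam c r L U q : ℝ} (hlam : 0 < lam) (hc : 0 < c) (hr : 0 < r)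
    (hL : 0 < L) (hU : 0 ≤ U) (hq : 2 ≤ q) :
    (lam * (c * r ^ (lam-1)) ^ 2) * (U ^ q * ((c * r ^ lam) ^ (-2:ℝ) * (lam * L) ^ (-(1+q/2))))
      = (lam ^ (-(1:ℝ)/2) * U) ^ q * (r ^ (-2:ℝ) * L ^ (-(1+q/2))) := by
  have hq0 : q ≠ 0 := by positivity
  rcases eq_or_lt_of_le hU with h | hU
  · rw [← h, Real.zero_rpow hq0, mul_zero, Real.zero_rpow hq0]
    ring
  have h1 : (c * r ^ lam) ^ (-2:ℝ) = c ^ (-2:ℝ) * r ^ (lam * (-2)) := by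
    rw [Real.mul_rpow hc.le (Real.rpow_nonneg hr.le _), ← Real.rpow_mul hr.le]
  have h2 : (lam * L) ^ (-(1+q/2)) = lam ^ (-(1+q/2)) * L ^ (-(1+q/2)) :=
    Real.mul_rpow hlam.le hL.le
  have h3 : (c * r ^ (lam-1)) ^ 2 = c ^ 2 * r ^ (2*lam - 2) := by
    have e : (r ^ (lam-1)) ^ (2:ℕ) = r ^ ((lam-1)*2) := by
      rw [← Real.rpow_natCast (r ^ (lam-1)) 2, ← Real.rpow_mul hr.le]
      norm_num
    rw [mul_pow, e, show (lam-1)*2 = 2*lam-2 by ring]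
  have h4 : c ^ 2 * c ^ (-2:ℝ) = 1 := by
    rw [← Real.rpow_natCast c 2, ← Real.rpow_add hc]
    norm_num
  have h5 : lam * lam ^ (-(1+q/2)) = lam ^ (-(q/2)) := by
    nth_rewrite 1 [← Real.rpow_one lam]
    rw [← Real.rpow_add hlam]; ring_nf
  have h6 : r ^ (2*lam-2) * r ^ (lam * (-2)) = r ^ (-2:ℝ) := by
    rw [← Real.rpow_add hr]; ring_nf
  have h7 : (lam ^ (-(1:ℝ)/2) * U) ^ q = lam ^ (-(q/2)) * U ^ q := by
    rw [Real.mul_rpow (Real.rpow_nonneg hlam.le _) hU.le, ← Real.rpow_mul hlam.le]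
    ring_nf
  rw [h1, h2, h3, h7]
  calc lam * (c ^ 2 * r ^ (2*lam-2)) * (U ^ q * (c ^ (-2:ℝ) * r ^ (lam * (-2))
        * (lam ^ (-(1+q/2)) * L ^ (-(1+q/2)))))
      = (c ^ 2 * c ^ (-2:ℝ)) * (lam * lam ^ (-(1+q/2))) * (r ^ (2*lam-2) * r ^ (lam*(-2)))
        * U ^ q * L ^ (-(1+q/2)) := by ring
    _ = lam ^ (-(q/2)) * U ^ q * (r ^ (-2:ℝ) * L ^ (-(1+q/2))) := by rw [h4, h5, h6]; ring

set_option maxHeartbeats 2000000 in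
/-- For `a > 1`, `q ≥ 2`, `0 < λ ≤ 1` and a radial smooth
function `u` compactly supported in the unit ball, the rescaled function
`u_λ(x) = λ^{-1/2} u((|x|/a)^{λ-1} x)` is supported in the ball of radius
`a^{1-1/λ} ≤ 1`, has the same Dirichlet energy as `u`, and has the same
weighted `L^q` integral as `u`. -/
theorem scaled_function_invariance
    (a q lam : ℝ) (ha : 1 < a) (hq : 2 ≤ q) (hlam0 : 0 < lam) (hlam1 : lam ≤ 1)
    (u : E2 → ℝ) (hu : ContDiff ℝ (⊤ : ℕ∞) u) (hsupp : HasCompactSupport u)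
    (hball : tsupport u ⊆ ball (0 : E2) 1) (hrad : IsRadial u) :
    tsupport (scaledFun a lam u) ⊆ closedBall (0 : E2) (a ^ (1 - 1 / lam)) ∧
    a ^ (1 - 1 / lam) ≤ 1 ∧
    (∫ x in ball (0 : E2) 1, ‖fderiv ℝ (scaledFun a lam u) x‖ ^ 2) =
      (∫ y in ball (0 : E2) 1, ‖fderiv ℝ u y‖ ^ 2) ∧
    (∫ x in ball (0 : E2) 1, |scaledFun a lam u x| ^ q * logWeight a q x) =
      (∫ y in ball (0 : E2) 1, |u y| ^ q * logWeight a q y) := by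
  have ha0 : (0:ℝ) < a := lt_trans one_pos ha
  have hcpos : (0:ℝ) < a ^ (1-lam) := Real.rpow_pos_of_pos ha0 _
  have hrho : (0:ℝ) < a ^ (1 - 1/lam) := Real.rpow_pos_of_pos ha0 _
  have hrho1 : a ^ (1 - 1/lam) ≤ 1 := by
    apply Real.rpow_le_one_of_one_le_of_nonpos ha.le
    have : (1:ℝ) ≤ 1 / lam := by
      rw [le_div_iff₀ hlam0]; linarith
    linarith
  -- u vanishes outside the unit ball
  have hu0 : ∀ y : E2, 1 ≤ ‖y‖ → u y = 0 := by
    intro y hy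
    apply image_eq_zero_of_notMem_tsupport
    intro hmem
    have := hball hmem
    simp only [mem_ball, dist_zero_right] at this
    linarith
  -- scaledFun vanishes outside ball of radius ρ
  have hsc0 : ∀ x : E2, a ^ (1 - 1/lam) ≤ ‖x‖ → scaledFun a lam u x = 0 := by
    intro x hx
    have hx0 : x ≠ 0 := by
      intro h; rw [h, norm_zero] at hx; linarith
    have h1 : (1:ℝ) ≤ ‖((‖x‖ / a) ^ (lam - 1)) • x‖ := by
      rw [norm_phi ha hx0]
      calc (1:ℝ) = a ^ (1-lam) * (a ^ (1 - 1/lam)) ^ lam := (rho_pow ha hlam0).symm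
        _ ≤ a ^ (1-lam) * ‖x‖ ^ lam :=
            mul_le_mul_of_nonneg_left (Real.rpow_le_rpow hrho.le hx hlam0.le) hcpos.le
    unfold scaledFun
    rw [hu0 _ h1, mul_zero]
  -- support statement
  have hsupp_sc : tsupport (scaledFun a lam u) ⊆ closedBall (0:E2) (a ^ (1 - 1/lam)) := by
    apply closure_minimal ?_ isClosed_closedBall
    intro x hx
    simp only [Function.mem_support] at hx
    by_contra h
    simp only [mem_closedBall, dist_zero_right, not_le] at h
    exact hx (hsc0 x h.le)
  -- radial profile
  set e0 : E2 := EuclideanSpace.single (0 : Fin 2) (1:ℝ) with he0def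
  have he0 : ‖e0‖ = 1 := by simp [he0def]
  set f : ℝ → ℝ := fun t => u (t • e0) with hfdef
  have hprof : ∀ x : E2, u x = f ‖x‖ := by
    intro x
    apply hrad
    rw [norm_smul, he0, Real.norm_eq_abs, abs_of_nonneg (norm_nonneg x), mul_one]
  have hfdiff : Differentiable ℝ f := by
    apply (hu.differentiable (by simp)).comp
    exact differentiable_id.smul_const e0
  have hfd : ∀ t : ℝ, HasDerivAt f (deriv f t) t := fun t =>
    (hfdiff t).hasDerivAt
  -- scaledFun as radial function
  have hsc_eq : scaledFun a lam u
      = fun z : E2 => lam ^ (-(1:ℝ)/2) * f (a ^ (1-lam) * ‖z‖ ^ lam) := by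
    funext z
    unfold scaledFun
    congr 1
    by_cases hz : z = 0
    · subst hz
      simp only [norm_zero, smul_zero]
      rw [Real.zero_rpow hlam0.ne', mul_zero, hprof (0:E2), norm_zero]
    · rw [hprof (((‖z‖ / a) ^ (lam - 1)) • z), norm_phi ha hz]
  have hu_eq : u = fun z : E2 => f ‖z‖ := funext hprof
  -- vanishing radius for the support of u
  obtain ⟨R, hR0, hR1, hRu⟩ : ∃ R : ℝ, 0 < R ∧ R < 1 ∧ ∀ y : E2, R < ‖y‖ → u y = 0 := by
    rcases Set.eq_empty_or_nonempty (tsupport u) with h | h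
    · exact ⟨1/2, by norm_num, by norm_num, fun y _ =>
        image_eq_zero_of_notMem_tsupport (by simp [h])⟩
    · obtain ⟨y₀, hy₀, hmax⟩ := hsupp.exists_isMaxOn h continuous_norm.continuousOn
      refine ⟨max ‖y₀‖ (1/2), lt_of_lt_of_le (by norm_num) (le_max_right _ _), ?_, ?_⟩
      · have : ‖y₀‖ < 1 := by
          have := hball hy₀
          simpa [dist_zero_right] using this
        exact max_lt this (by norm_num)
      · intro y hy
        apply image_eq_zero_of_notMem_tsupport
        intro hmem
        exact absurd (hmax hmem) (not_le.2 (lt_of_le_of_lt (le_max_left _ _) hy))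
  -- scaledFun vanishes on a neighborhood of {‖x‖ ≥ ρ}
  set r0 : ℝ := (R / a ^ (1-lam)) ^ (1/lam) with hr0def
  have hr0pos : 0 < r0 := Real.rpow_pos_of_pos (by positivity) _
  have hr0lam : r0 ^ lam = R / a ^ (1-lam) := by
    rw [hr0def, ← Real.rpow_mul (by positivity), one_div, inv_mul_cancel₀ hlam0.ne',
      Real.rpow_one]
  have hrho_lam : (a ^ (1 - 1/lam)) ^ lam = (a ^ (1-lam))⁻¹ :=
    eq_inv_of_mul_eq_one_right (rho_pow ha hlam0)
  have hr0rho : r0 < a ^ (1 - 1/lam) := by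
    by_contra hcon
    push_neg at hcon
    have h1 : (a ^ (1 - 1/lam)) ^ lam ≤ r0 ^ lam :=
      Real.rpow_le_rpow hrho.le hcon hlam0.le
    rw [hr0lam, hrho_lam, div_eq_mul_inv] at h1
    nlinarith [inv_pos.2 hcpos]
  have hsc_zero' : ∀ z : E2, r0 < ‖z‖ → scaledFun a lam u z = 0 := by
    intro z hz
    have hz0 : z ≠ 0 := by
      intro h; rw [h, norm_zero] at hz; linarith
    have h1 : R < ‖((‖z‖ / a) ^ (lam - 1)) • z‖ := by
      rw [norm_phi ha hz0]
      have h2 : r0 ^ lam < ‖z‖ ^ lam := Real.rpow_lt_rpow hr0pos.le hz hlam0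
      rw [hr0lam] at h2
      calc R = a ^ (1-lam) * (R / a ^ (1-lam)) := by field_simp
        _ < a ^ (1-lam) * ‖z‖ ^ lam := mul_lt_mul_of_pos_left h2 hcpos
    unfold scaledFun
    rw [hRu _ h1, mul_zero]
  have hfderiv0 : ∀ x : E2, a ^ (1 - 1/lam) ≤ ‖x‖ →
      fderiv ℝ (scaledFun a lam u) x = 0 := by
    intro x hx
    have hopen : IsOpen {z : E2 | r0 < ‖z‖} := isOpen_lt continuous_const continuous_norm
    have hxmem : x ∈ {z : E2 | r0 < ‖z‖} := lt_of_lt_of_le hr0rho hx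
    have hev : scaledFun a lam u =ᶠ[nhds x] (fun _ => (0:ℝ)) :=
      Filter.eventuallyEq_of_mem (hopen.mem_nhds hxmem) (fun z hz => hsc_zero' z hz)
    rw [hev.fderiv_eq]
    exact fderiv_const_apply 0
  -- integral reduction lemma
  have reduce : ∀ H : E2 → ℝ, (∀ x : E2, a ^ (1 - 1/lam) ≤ ‖x‖ → H x = 0) →
      (∫ x in ball (0:E2) 1, H x)
        = ∫ x in ball (0:E2) (a ^ (1 - 1/lam)) \ {0}, H x := by
    intro H h0
    have step1 : (∫ x in ball (0:E2) 1, H x)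
        = ∫ x in ball (0:E2) 1, (ball (0:E2) (a ^ (1 - 1/lam))).indicator H x := by
      apply setIntegral_congr_fun measurableSet_ball
      intro x _
      by_cases hx : x ∈ ball (0:E2) (a ^ (1 - 1/lam))
      · rw [Set.indicator_of_mem hx]
      · rw [Set.indicator_of_notMem hx]
        apply h0
        simp only [mem_ball, dist_zero_right, not_lt] at hx
        exact hx
    rw [step1, setIntegral_indicator measurableSet_ball]
    have hss : ball (0:E2) 1 ∩ ball (0:E2) (a ^ (1 - 1/lam))
        = ball (0:E2) (a ^ (1 - 1/lam)) :=
      Set.inter_eq_right.2 (ball_subset_ball hrho1)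
    rw [hss]
    exact setIntegral_congr_set ((diff_ae_eq_self).2
      (measure_mono_null Set.inter_subset_right (measure_singleton 0))).symm
  have hSmeas : MeasurableSet (ball (0:E2) (a ^ (1 - 1/lam)) \ {0}) :=
    measurableSet_ball.diff (measurableSet_singleton 0)
  -- derivative facts on the punctured ball
  refine ⟨hsupp_sc, hrho1, ?_, ?_⟩
  · -- energy
    rw [cov_ball ha hlam0 (fun y => ‖fderiv ℝ u y‖ ^ 2),
      reduce _ (fun x hx => by rw [hfderiv0 x hx, norm_zero]; norm_num)]
    apply setIntegral_congr_fun hSmeas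
    rintro x ⟨hxball, hx0⟩
    have hx0' : x ≠ 0 := hx0
    have hxp : (0:ℝ) < ‖x‖ := norm_pos_iff.2 hx0'
    set s' : ℝ := a ^ (1-lam) * ‖x‖ ^ lam with hs'def
    have hs'pos : 0 < s' := by positivity
    -- derivative of the profile of scaledFun
    have hrpow : HasDerivAt (fun t:ℝ => t ^ lam) (lam * ‖x‖ ^ (lam-1)) ‖x‖ :=
      Real.hasDerivAt_rpow_const (Or.inl hxp.ne')
    have hmul : HasDerivAt (fun t:ℝ => a ^ (1-lam) * t ^ lam)
        (a ^ (1-lam) * (lam * ‖x‖ ^ (lam-1))) ‖x‖ := hrpow.const_mul _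
    have hcomp : HasDerivAt (fun t:ℝ => f (a ^ (1-lam) * t ^ lam))
        (deriv f s' * (a ^ (1-lam) * (lam * ‖x‖ ^ (lam-1)))) ‖x‖ := by
      exact HasDerivAt.comp ‖x‖ (hfd s') hmul
    have hgd : HasDerivAt (fun t:ℝ => lam ^ (-(1:ℝ)/2) * f (a ^ (1-lam) * t ^ lam))
        (lam ^ (-(1:ℝ)/2) * (deriv f s' * (a ^ (1-lam) * (lam * ‖x‖ ^ (lam-1))))) ‖x‖ :=
      hcomp.const_mul _
    have h1 : ‖fderiv ℝ (scaledFun a lam u) x‖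
        = |lam ^ (-(1:ℝ)/2) * (deriv f s' * (a ^ (1-lam) * (lam * ‖x‖ ^ (lam-1))))| := by
      rw [hsc_eq]
      exact radial_fderiv_norm hx0' hgd
    have hphix : ((‖x‖ / a) ^ (lam - 1)) • x ≠ 0 := by
      intro h
      have : (0:ℝ) < ‖((‖x‖ / a) ^ (lam - 1)) • x‖ := by
        rw [norm_phi ha hx0']; positivity
      rw [h, norm_zero] at this; linarith
    have h2 : ‖fderiv ℝ u (((‖x‖ / a) ^ (lam - 1)) • x)‖ = |deriv f s'| := by
      rw [hu_eq]
      have := radial_fderiv_norm hphix (hfd ‖((‖x‖ / a) ^ (lam - 1)) • x‖)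
      rw [this, norm_phi ha hx0']
    have hdet : |(Dphi a lam x).det| = lam * (a ^ (1-lam) * ‖x‖ ^ (lam-1)) ^ 2 := by
      rw [det_Dphi a lam ha0 hx0', scalar_id2 ha hxp]
      apply abs_of_nonneg
      positivity
    simp only
    rw [h1, h2, hdet, sq_abs, sq_abs]
    have hk : (lam ^ (-(1:ℝ)/2)) ^ 2 * lam ^ 2 = lam := by
      rw [← Real.rpow_natCast (lam ^ (-(1:ℝ)/2)) 2, ← Real.rpow_mul hlam0.le,
        ← Real.rpow_natCast lam 2, ← Real.rpow_add hlam0]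
      norm_num
    linear_combination
      ((deriv f s') ^ 2 * (a ^ (1-lam)) ^ 2 * (‖x‖ ^ (lam-1)) ^ 2) * hk
  · -- weighted integral
    rw [cov_ball ha hlam0 (fun y => |u y| ^ q * logWeight a q y),
      reduce _ ?vanish]
    case vanish =>
      intro x hx
      rw [hsc0 x hx, abs_zero, Real.zero_rpow (by positivity : q ≠ 0), zero_mul]
    apply setIntegral_congr_fun hSmeas
    rintro x ⟨hxball, hx0⟩
    have hx0' : x ≠ 0 := hx0
    have hxp : (0:ℝ) < ‖x‖ := norm_pos_iff.2 hx0'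
    have hxrho : ‖x‖ < a ^ (1 - 1/lam) := by simpa using hxball
    have hx1 : ‖x‖ < 1 := lt_of_lt_of_le hxrho hrho1
    have hLpos : 0 < Real.log (a / ‖x‖) :=
      Real.log_pos ((one_lt_div hxp).2 (lt_of_lt_of_le hx1 ha.le))
    have hnphi : ‖((‖x‖ / a) ^ (lam - 1)) • x‖ = a ^ (1-lam) * ‖x‖ ^ lam :=
      norm_phi ha hx0'
    have hlog : Real.log (a / (a ^ (1-lam) * ‖x‖ ^ lam)) = lam * Real.log (a / ‖x‖) := by
      have hdiv : a / (a ^ (1-lam) * ‖x‖ ^ lam) = (a / ‖x‖) ^ lam := by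
        rw [Real.div_rpow ha0.le hxp.le, div_eq_div_iff (by positivity) (by positivity)]
        rw [show a ^ lam * (a ^ (1-lam) * ‖x‖ ^ lam) = (a ^ lam * a ^ (1-lam)) * ‖x‖ ^ lam
          by ring, ← Real.rpow_add ha0]
        norm_num
      rw [hdiv, Real.log_rpow (by positivity)]
    have hdet : |(Dphi a lam x).det| = lam * (a ^ (1-lam) * ‖x‖ ^ (lam-1)) ^ 2 := by
      rw [det_Dphi a lam ha0 hx0', scalar_id2 ha hxp]
      apply abs_of_nonneg
      positivity
    have habs : |scaledFun a lam u x|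
        = lam ^ (-(1:ℝ)/2) * |u (((‖x‖ / a) ^ (lam - 1)) • x)| := by
      unfold scaledFun
      rw [abs_mul, abs_of_pos (Real.rpow_pos_of_pos hlam0 _)]
    simp only
    rw [hdet, habs]
    unfold logWeight
    rw [hnphi, hlog]
    exact (weight_alg hlam0 hcpos hxp hLpos (abs_nonneg _) hq).symm

end
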